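/- Let T ≥ 2 be an integer, i₀ > 0 a real number, and i : ℝ → ℝ a function that is nonnegative, monotonically nondecreasing, convex, and differentiable on [0,∞). If moreover ∑_{t=1}^{T-1} i'(0)/(i₀ + t·i(0))² > 1, then every minimizer x* of the cost C over the feasible set satisfies x*_1 > 0 and x*_k = 0 for k = 2,…,T−1; that is, the optimal exploration is an immediate excitation. -/

import Mathlib

/-- Partial information `D_t(x) = i₀ + ∑_{s=1}^{t} i(x_s)`. -/
noncomputable def Dinfo (i0 : ℝ) (i : ℝ → ℝ) (x : ℕ → ℝ) (t : ℕ) : ℝ :=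
  i0 + ∑ s ∈ Finset.Icc 1 t, i (x s)

/-- Cost `C(x) = ∑_{t=1}^{T-1} 1/D_t(x) + ∑_{t=1}^{T-1} x_t`. -/
noncomputable def cost (T : ℕ) (i0 : ℝ) (i : ℝ → ℝ) (x : ℕ → ℝ) : ℝ :=
  (∑ t ∈ Finset.Icc 1 (T - 1), 1 / Dinfo i0 i x t) + ∑ t ∈ Finset.Icc 1 (T - 1), x t

/-- Feasibility: `x_k ≥ 0` for `k = 1, …, T-1`. -/
def Feasible (T : ℕ) (x : ℕ → ℝ) : Prop :=
  ∀ k, 1 ≤ k → k ≤ T - 1 → 0 ≤ x k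

/-!
Since every term of `∑ i'(0) / (i₀ + t i(0))²` has the sign of `i'(0)`, the hypothesis forces
`i'(0) > 0`, so the convex function `i` is strictly increasing on `[0, ∞)`. Moving the excitation
`x_k` (`k ≥ 2`) onto the first step therefore strictly increases `D_1`, and it decreases no later
`D_t`, because for a convex `i` the increment `i(a + c) - i(a)` grows with `a`. The linear part of
the cost is unchanged, so the cost strictly drops: a minimizer has `x_k = 0` for `k ≥ 2`.
If also `x_1 = 0`, then along `e ↦ e δ₁` the cost has right derivative
`1 - ∑ i'(0) / (i₀ + t i(0))² < 0` at `e = 0`, contradicting minimality.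
-/

section ConvexFunctions

open Set

lemma ConvexOn.map_add_sub_map_le {𝕜 : Type*} [Field 𝕜] [LinearOrder 𝕜]
    [IsStrictOrderedRing 𝕜] {s : Set 𝕜} {f : 𝕜 → 𝕜} {a b c : 𝕜}
    (hf : ConvexOn 𝕜 s f) (ha : a ∈ s) (hbc : b + c ∈ s) (hab : a ≤ b) (hc : 0 < c) :
    f (a + c) - f a ≤ f (b + c) - f b := by
  have hb : b ∈ s := hf.1.ordConnected.out ha hbc ⟨hab, by linarith⟩
  have hac : a + c ∈ s := hf.1.ordConnected.out ha hbc ⟨by linarith, by linarith⟩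
  have h₁ := hf.secant_mono ha hac hbc (by linarith) (by linarith) (by linarith)
  have h₂ := hf.secant_mono hbc ha hb (by linarith) (by linarith) hab
  rw [← neg_div_neg_eq, neg_sub, neg_sub, ← neg_div_neg_eq (f b - _), neg_sub, neg_sub,
    add_sub_cancel_left] at h₂
  rw [add_sub_cancel_left] at h₁
  exact (div_le_div_iff_of_pos_right hc).1 (h₁.trans h₂)

lemma ConvexOn.strictMonoOn_Ici_of_hasDerivWithinAt_pos {f : ℝ → ℝ} {a f' : ℝ}
    (hf : ConvexOn ℝ (Ici a) f) (hd : HasDerivWithinAt f f' (Ici a) a) (hpos : 0 < f') :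
    StrictMonoOn f (Ici a) := by
  intro x hx y hy hxy
  have hay : f' ≤ slope f a y :=
    hf.le_slope_of_hasDerivWithinAt self_mem_Ici hy (hx.trans_lt hxy) hd
  have hslope : slope f a y ≤ slope f x y := by
    rcases (mem_Ici.1 hx).eq_or_lt with rfl | hax
    · rfl
    · rw [slope_comm f a, slope_comm f x]
      exact hf.slope_mono hy ⟨self_mem_Ici, hax.trans hxy |>.ne⟩ ⟨hx, hxy.ne⟩ hax.le
  exact (slope_pos_iff_of_le hxy.le).1 (hpos.trans_le (hay.trans hslope))

lemma HasDerivWithinAt.nonneg_of_isMinOn_Ici {g : ℝ → ℝ} {g' a : ℝ}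
    (hg : HasDerivWithinAt g g' (Ici a) a) (hmin : IsMinOn g (Ici a) a) : 0 ≤ g' := by
  have h1 : (1 : ℝ) ∈ posTangentConeAt (Ici a) a :=
    mem_posTangentConeAt_of_segment_subset (by
      rw [segment_eq_Icc (by linarith)]; exact Icc_subset_Ici_self)
  simpa using hmin.localize.hasFDerivWithinAt_nonneg hg.hasFDerivWithinAt h1

end ConvexFunctions

section Cost

open Finset

variable {T : ℕ} {i0 : ℝ} {i : ℝ → ℝ} {x y : ℕ → ℝ}

lemma Dinfo_pos (hi0 : 0 < i0) (hi : ∀ y, 0 ≤ y → 0 ≤ i y) (hx : Feasible T x) {t : ℕ}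
    (ht : t ≤ T - 1) : 0 < Dinfo i0 i x t := by
  have hsum : 0 ≤ ∑ s ∈ Icc 1 t, i (x s) := sum_nonneg fun s hs =>
    hi _ (hx s (mem_Icc.1 hs).1 ((mem_Icc.1 hs).2.trans ht))
  unfold Dinfo
  linarith

lemma cost_congr (h : ∀ t ∈ Icc 1 (T - 1), x t = y t) : cost T i0 i x = cost T i0 i y := by
  have hD : ∀ t ∈ Icc 1 (T - 1), Dinfo i0 i x t = Dinfo i0 i y t := fun t ht => by
    unfold Dinfo
    congr 1
    exact sum_congr rfl fun s hs =>
      congrArg i (h s (Icc_subset_Icc_right (mem_Icc.1 ht).2 hs))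
  unfold cost
  rw [sum_congr rfl fun t ht => by rw [hD t ht], sum_congr rfl h]

def moveToFirst (x : ℕ → ℝ) (k : ℕ) : ℕ → ℝ :=
  Function.update (Function.update x k 0) 1 (x 1 + x k)

lemma Feasible.moveToFirst (hx : Feasible T x) {k : ℕ} (hk : 0 ≤ x k) :
    Feasible T (moveToFirst x k) := by
  intro s hs hsT
  unfold _root_.moveToFirst
  rcases eq_or_ne s 1 with rfl | hs1
  · rw [Function.update_self]
    exact add_nonneg (hx 1 le_rfl hsT) hk
  rw [Function.update_of_ne hs1]
  rcases eq_or_ne s k with rfl | hsk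
  · rw [Function.update_self]
  · rw [Function.update_of_ne hsk]
    exact hx s hs hsT

lemma sum_comp_moveToFirst_sub_sum (g : ℝ → ℝ) {k : ℕ} (hk : k ≠ 1) {s : Finset ℕ}
    (h1 : 1 ∈ s) :
    ∑ t ∈ s, g (moveToFirst x k t) - ∑ t ∈ s, g (x t) =
      (g (x 1 + x k) - g (x 1)) + if k ∈ s then g 0 - g (x k) else 0 := by
  have hrest : ∀ t, t ≠ 1 → t ≠ k → g (moveToFirst x k t) - g (x t) = 0 :=
    fun t ht1 htk => by
      rw [moveToFirst, Function.update_of_ne ht1, Function.update_of_ne htk, sub_self]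
  rw [← sum_sub_distrib]
  split_ifs with hks
  · rw [sum_eq_add_of_mem 1 k h1 hks hk.symm fun t _ ht => hrest t ht.1 ht.2]
    simp [moveToFirst, Function.update_of_ne hk]
  · rw [sum_eq_single_of_mem 1 h1 fun t ht ht1 => hrest t ht1 (ne_of_mem_of_not_mem ht hks)]
    simp [moveToFirst]

lemma Dinfo_moveToFirst_sub_Dinfo {k : ℕ} (hk : k ≠ 1) {t : ℕ} (ht : 1 ≤ t) :
    Dinfo i0 i (moveToFirst x k) t - Dinfo i0 i x t =
      (i (x 1 + x k) - i (x 1)) + if k ∈ Icc 1 t then i 0 - i (x k) else 0 := by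
  rw [Dinfo, Dinfo, add_sub_add_left_eq_sub]
  exact sum_comp_moveToFirst_sub_sum i hk (mem_Icc.2 ⟨le_rfl, ht⟩)

lemma cost_moveToFirst_lt (hi0 : 0 < i0) (hi : ∀ y, 0 ≤ y → 0 ≤ i y)
    (hconv : ConvexOn ℝ (Set.Ici 0) i) (hmono : StrictMonoOn i (Set.Ici 0))
    (hx : Feasible T x) {k : ℕ} (hk : 1 < k) (hkT : k ≤ T - 1) (hxk : 0 < x k) :
    cost T i0 i (moveToFirst x k) < cost T i0 i x := by
  have hk1 : k ≠ 1 := hk.ne'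
  have h1T : 1 ∈ Icc 1 (T - 1) := mem_Icc.2 ⟨le_rfl, by omega⟩
  have hx1 : 0 ≤ x 1 := hx 1 le_rfl (by omega)
  have hgain : 0 < i (x 1 + x k) - i (x 1) :=
    sub_pos.2 (hmono hx1 (add_nonneg hx1 hxk.le) (lt_add_of_pos_right _ hxk))
  have hloss : i (x k) - i 0 ≤ i (x 1 + x k) - i (x 1) := by
    simpa only [zero_add] using
      hconv.map_add_sub_map_le Set.self_mem_Ici (add_nonneg hx1 hxk.le) hx1 hxk
  have hle : ∀ t ∈ Icc 1 (T - 1), Dinfo i0 i x t ≤ Dinfo i0 i (moveToFirst x k) t :=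
    fun t ht => by
      have hD := Dinfo_moveToFirst_sub_Dinfo (i0 := i0) (i := i) (x := x) hk1 (mem_Icc.1 ht).1
      split_ifs at hD <;> linarith
  have hlt : Dinfo i0 i x 1 < Dinfo i0 i (moveToFirst x k) 1 := by
    have hD := Dinfo_moveToFirst_sub_Dinfo (i0 := i0) (i := i) (x := x) hk1 le_rfl
    rw [if_neg (by simp [hk1])] at hD
    linarith
  have hlin : ∑ t ∈ Icc 1 (T - 1), moveToFirst x k t = ∑ t ∈ Icc 1 (T - 1), x t := by
    have hsum := sum_comp_moveToFirst_sub_sum id (x := x) hk1 h1T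
    rw [if_pos (mem_Icc.2 ⟨hk.le, hkT⟩)] at hsum
    simp only [id] at hsum
    linarith
  rw [cost, cost, hlin]
  refine add_lt_add_left (sum_lt_sum (fun t ht => ?_) ⟨1, h1T, ?_⟩) _
  · exact one_div_le_one_div_of_le (Dinfo_pos hi0 hi hx (mem_Icc.1 ht).2) (hle t ht)
  · exact one_div_lt_one_div_of_lt (Dinfo_pos hi0 hi hx (mem_Icc.1 h1T).2) hlt

lemma feasible_single {e : ℝ} (he : 0 ≤ e) : Feasible T (Pi.single 1 e) := fun s _ _ => by
  rw [Pi.single_apply]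
  split_ifs
  exacts [he, le_rfl]

lemma Dinfo_single {t : ℕ} (ht : 1 ≤ t) (e : ℝ) :
    Dinfo i0 i (Pi.single 1 e) t = i0 + ((t : ℝ) - 1) * i 0 + i e := by
  rw [Dinfo, ← add_sum_Ioc_eq_sum_Icc ht, Pi.single_eq_same,
    sum_congr rfl fun s hs => by rw [Pi.single_eq_of_ne (mem_Ioc.1 hs).1.ne'], sum_const,
    Nat.card_Ioc, nsmul_eq_mul, Nat.cast_sub ht, Nat.cast_one]
  ring

lemma cost_single (hT : 2 ≤ T) (e : ℝ) :
    cost T i0 i (Pi.single 1 e) =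
      ∑ t ∈ Icc 1 (T - 1), (i0 + ((t : ℝ) - 1) * i 0 + i e)⁻¹ + e := by
  rw [cost, sum_pi_single', if_pos (mem_Icc.2 ⟨le_rfl, by omega⟩)]
  congr 1
  exact sum_congr rfl fun t ht => by rw [Dinfo_single (mem_Icc.1 ht).1, one_div]

lemma hasDerivWithinAt_cost_single (hT : 2 ≤ T) (hi0 : 0 < i0) (hi : 0 ≤ i 0) {d : ℝ}
    (hd : HasDerivWithinAt i d (Set.Ici 0) 0) :
    HasDerivWithinAt (fun e => cost T i0 i (Pi.single 1 e))
      (1 - ∑ t ∈ Icc 1 (T - 1), d / (i0 + (t : ℝ) * i 0) ^ 2) (Set.Ici 0) 0 := by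
  simp_rw [cost_single hT]
  rw [sub_eq_neg_add, ← sum_neg_distrib]
  refine (HasDerivWithinAt.fun_sum fun t ht => ?_).add (hasDerivWithinAt_id 0 _)
  have ht1 : (1 : ℝ) ≤ t := by exact_mod_cast (mem_Icc.1 ht).1
  have hpos : 0 < i0 + ((t : ℝ) - 1) * i 0 + i 0 := by nlinarith
  exact ((hd.const_add (i0 + ((t : ℝ) - 1) * i 0)).inv hpos.ne').congr_deriv (by ring)

end Cost

theorem immediate_excitation_optimal_general (T : ℕ) (hT : 2 ≤ T) (i0 : ℝ) (hi0 : 0 < i0) (i : ℝ → ℝ)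
    (hnonneg : ∀ y, 0 ≤ y → 0 ≤ i y)
    (hconv : ConvexOn ℝ (Set.Ici 0) i)
    (hdiff : DifferentiableOn ℝ i (Set.Ici 0))
    (hcond : 1 < ∑ t ∈ Finset.Icc 1 (T - 1),
      derivWithin i (Set.Ici 0) 0 / (i0 + (t : ℝ) * i 0) ^ 2)
    (xs : ℕ → ℝ) (hfeas : Feasible T xs)
    (hmin : ∀ x, Feasible T x → cost T i0 i xs ≤ cost T i0 i x) :
    0 < xs 1 ∧ ∀ k, 2 ≤ k → k ≤ T - 1 → xs k = 0 := by
  set d := derivWithin i (Set.Ici 0) 0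
  have hi' : HasDerivWithinAt i d (Set.Ici 0) 0 := (hdiff 0 Set.self_mem_Ici).hasDerivWithinAt
  have hd : 0 < d := by
    by_contra! hd
    exact hcond.not_ge <| (Finset.sum_nonpos fun t _ =>
      div_nonpos_of_nonpos_of_nonneg hd (sq_nonneg _)).trans zero_le_one
  have hmono := hconv.strictMonoOn_Ici_of_hasDerivWithinAt_pos hi' hd
  have hlater : ∀ k, 2 ≤ k → k ≤ T - 1 → xs k = 0 := fun k hk hkT => by
    by_contra hne
    have hxk : 0 < xs k := (hfeas k (by omega) hkT).lt_of_ne' hne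
    exact (hmin _ (hfeas.moveToFirst hxk.le)).not_gt
      (cost_moveToFirst_lt hi0 hnonneg hconv hmono hfeas hk hkT hxk)
  refine ⟨(hfeas 1 le_rfl (by omega)).lt_of_ne' fun h1 => ?_, hlater⟩
  have hxs : cost T i0 i xs = cost T i0 i (Pi.single 1 0) := cost_congr fun t ht => by
    rw [Pi.single_zero, Pi.zero_apply]
    rcases (Finset.mem_Icc.1 ht).1.eq_or_lt with rfl | ht1
    exacts [h1, hlater t ht1 (Finset.mem_Icc.1 ht).2]
  have hisMin : IsMinOn (fun e => cost T i0 i (Pi.single 1 e)) (Set.Ici 0) 0 :=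
    isMinOn_iff.2 fun e he => hxs ▸ hmin _ (feasible_single he)
  have hderiv_nonneg :=
    (hasDerivWithinAt_cost_single hT hi0 (hnonneg 0 le_rfl) hi').nonneg_of_isMinOn_Ici hisMin
  linarith

theorem immediate_excitation_optimal (T : ℕ) (hT : 2 ≤ T) (i0 : ℝ) (hi0 : 0 < i0) (i : ℝ → ℝ)
    (hnonneg : ∀ y, 0 ≤ y → 0 ≤ i y)
    (hmono : ∀ a b, 0 ≤ a → a ≤ b → i a ≤ i b)
    (hconv : ConvexOn ℝ (Set.Ici 0) i)
    (hdiff : DifferentiableOn ℝ i (Set.Ici 0))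
    (hcond : 1 < ∑ t ∈ Finset.Icc 1 (T - 1),
      derivWithin i (Set.Ici 0) 0 / (i0 + (t : ℝ) * i 0) ^ 2)
    (xs : ℕ → ℝ) (hfeas : Feasible T xs)
    (hmin : ∀ x, Feasible T x → cost T i0 i xs ≤ cost T i0 i x) :
    0 < xs 1 ∧ ∀ k, 2 ≤ k → k ≤ T - 1 → xs k = 0 :=
  immediate_excitation_optimal_general T hT i0 hi0 i hnonneg hconv hdiff hcond xs hfeas hmin
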